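/- Let ξ₁,…,ξ_t be exchangeable {0,1}-valued random variables, set b = 2⌊t^{1/10}/2⌋, and suppose P(ξ₁ = ⋯ = ξ_b = 1) ≤ q^b for some q ∈ (0,1). Then there is an absolute constant t₀ such that for all t ≥ t₀, P(Σ_{i=1}^t ξ_i ≥ t^{3/5} + (1 + t^{−1/12})·q·t) ≤ exp(−t^{1/70}). -/

import Mathlib

/-!
Let `S` count the indices with `ξ i = 1`. Since `C(S, b) = ∑_{|A| = b} 1[ξ = 1 on A]`,
exchangeability gives `E C(S, b) = C(t, b) P(ξ₁ = ⋯ = ξ_b = 1) ≤ C(t, b) q^b`, and Markov's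
inequality for `C(S, b)` bounds `P(S ≥ N)` by `C(t, b) q^b / C(N, b)`. For
`N ≥ t^{3/5} + (1 + ε) q t` with `ε = t^{-1/12}`, the estimates `C(t, b) ≤ t^b / b!` and
`C(N, b) ≥ (N + 1 - b)^b / b! ≥ ((1 + ε) q t)^b / b!` bound this ratio by
`(1 + ε)^{-b} ≤ exp (-b ε / 2)`, and `b ε / 2 ≥ t^{1/60} / 4 ≥ t^{1/70}` as soon as `t^{1/420} ≥ 4`.
-/

open MeasureTheory ProbabilityTheory Finset Real
open scoped ENNReal

section Counting

variable {Ω ι α : Type*} [Fintype ι]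

lemma filter_subset_powersetCard_univ [DecidableEq ι] (S : Finset ι) (b : ℕ) :
    {A ∈ powersetCard b (univ : Finset ι) | A ⊆ S} = powersetCard b S := by
  ext A
  simp only [mem_filter, mem_powersetCard, subset_univ, true_and]
  tauto

lemma choose_card_eq_sum_indicator {s : Set α} [DecidablePred (· ∈ s)] (ξ : ι → Ω → α) (b : ℕ)
    (ω : Ω) :
    ((#{i | ξ i ω ∈ s}).choose b : ℝ≥0∞) =
      ∑ A ∈ powersetCard b univ, {ω | ∀ i ∈ A, ξ i ω ∈ s}.indicator 1 ω := by
  classical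
  have hind (A : Finset ι) : {ω | ∀ i ∈ A, ξ i ω ∈ s}.indicator (1 : Ω → ℝ≥0∞) ω
      = if A ⊆ ({i | ξ i ω ∈ s} : Finset ι) then 1 else 0 := by
    simp [Set.indicator_apply, Finset.subset_iff]
  simp only [hind, sum_boole, filter_subset_powersetCard_univ, card_powersetCard]

lemma sum_eq_card_filter_eq_one {x : ι → ℝ} (h01 : ∀ i, x i = 0 ∨ x i = 1) :
    ∑ i, x i = #{i | x i = 1} := by
  rw [natCast_card_filter]
  refine sum_congr rfl fun i _ => ?_
  rcases h01 i with h | h <;> simp [h]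

end Counting

section Exchangeable

variable {Ω ι α : Type*} [MeasurableSpace Ω] [MeasurableSpace α]

def Exchangeable (μ : Measure Ω) (ξ : ι → Ω → α) : Prop :=
  ∀ σ : Equiv.Perm ι, μ.map (fun ω i => ξ (σ i) ω) = μ.map (fun ω i => ξ i ω)

variable {μ : Measure Ω} {ξ : ι → Ω → α} {s : Set α}

lemma measurableSet_forall_mem_apply_mem (hs : MeasurableSet s) (A : Finset ι) :
    MeasurableSet {f : ι → α | ∀ i ∈ A, f i ∈ s} := by
  simp only [Set.ofPred_forall]
  exact .biInter A.countable_toSet fun i _ => measurable_pi_apply i hs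

lemma measurableSet_forall_mem_mem (hmeas : ∀ i, Measurable (ξ i)) (hs : MeasurableSet s)
    (A : Finset ι) : MeasurableSet {ω | ∀ i ∈ A, ξ i ω ∈ s} :=
  measurableSet_forall_mem_apply_mem hs A |>.preimage (measurable_pi_lambda _ hmeas)

lemma Exchangeable.measure_forall_mem_eq (hξ : Exchangeable μ ξ) (hmeas : ∀ i, Measurable (ξ i))
    (hs : MeasurableSet s) {A B : Finset ι} (hAB : #A = #B) :
    μ {ω | ∀ i ∈ A, ξ i ω ∈ s} = μ {ω | ∀ i ∈ B, ξ i ω ∈ s} := by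
  obtain ⟨σ, rfl⟩ := Equiv.Perm.exists_map_finset_eq A B hAB
  have h := congrArg (· {f : ι → α | ∀ i ∈ A, f i ∈ s}) (hξ σ)
  simp only [Measure.map_apply (measurable_pi_lambda _ fun i => hmeas _)
    (measurableSet_forall_mem_apply_mem hs A), Set.preimage_ofPred_eq] at h
  simp only [forall_mem_map, Equiv.coe_toEmbedding]
  exact h.symm

variable [Fintype ι]

lemma lintegral_choose_card_eq_sum [DecidablePred (· ∈ s)] (hmeas : ∀ i, Measurable (ξ i))
    (hs : MeasurableSet s) (b : ℕ) :
    ∫⁻ ω, ((#{i | ξ i ω ∈ s}).choose b : ℝ≥0∞) ∂μ =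
      ∑ A ∈ powersetCard b univ, μ {ω | ∀ i ∈ A, ξ i ω ∈ s} := by
  simp only [choose_card_eq_sum_indicator ξ b]
  rw [lintegral_finsetSum _ fun A _ =>
    measurable_one.indicator (measurableSet_forall_mem_mem hmeas hs A)]
  simp only [lintegral_indicator_one (measurableSet_forall_mem_mem hmeas hs _)]

lemma Exchangeable.choose_mul_measure_le [DecidablePred (· ∈ s)] (hξ : Exchangeable μ ξ)
    (hmeas : ∀ i, Measurable (ξ i)) (hs : MeasurableSet s) (A : Finset ι) (N : ℕ) :
    (N.choose #A : ℝ≥0∞) * μ {ω | N ≤ #{i | ξ i ω ∈ s}} ≤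
      (Fintype.card ι).choose #A * μ {ω | ∀ i ∈ A, ξ i ω ∈ s} := by
  have hmeas_choose : Measurable fun ω => ((#{i | ξ i ω ∈ s}).choose #A : ℝ≥0∞) := by
    simp only [choose_card_eq_sum_indicator ξ #A]
    exact Finset.measurable_sum _ fun B _ =>
      measurable_one.indicator (measurableSet_forall_mem_mem hmeas hs B)
  calc (N.choose #A : ℝ≥0∞) * μ {ω | N ≤ #{i | ξ i ω ∈ s}}
      ≤ (N.choose #A : ℝ≥0∞) *
          μ {ω | (N.choose #A : ℝ≥0∞) ≤ (#{i | ξ i ω ∈ s}).choose #A} := by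
        refine mul_le_mul_right (measure_mono fun ω (hω : N ≤ _) => ?_) _
        exact_mod_cast Nat.choose_le_choose _ hω
    _ ≤ ∫⁻ ω, ((#{i | ξ i ω ∈ s}).choose #A : ℝ≥0∞) ∂μ :=
        mul_meas_ge_le_lintegral hmeas_choose _
    _ = ∑ B ∈ powersetCard #A univ, μ {ω | ∀ i ∈ B, ξ i ω ∈ s} :=
        lintegral_choose_card_eq_sum hmeas hs _
    _ = (Fintype.card ι).choose #A * μ {ω | ∀ i ∈ A, ξ i ω ∈ s} := by
        rw [sum_congr rfl fun B hB => hξ.measure_forall_mem_eq hmeas hs (mem_powersetCard.1 hB).2,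
          sum_const, card_powersetCard, card_univ, nsmul_eq_mul]

end Exchangeable

lemma Exchangeable.choose_ceil_mul_measure_le {Ω ι : Type*} [MeasurableSpace Ω] [Fintype ι]
    {μ : Measure Ω} {ξ : ι → Ω → ℝ} (hξ : Exchangeable μ ξ)
    (hmeas : ∀ i, Measurable (ξ i)) (h01 : ∀ i ω, ξ i ω = 0 ∨ ξ i ω = 1) (T : ℝ)
    (A : Finset ι) :
    (⌈T⌉₊.choose #A : ℝ≥0∞) * μ {ω | T ≤ ∑ i, ξ i ω} ≤
      (Fintype.card ι).choose #A * μ {ω | ∀ i ∈ A, ξ i ω = 1} := by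
  classical
  have h := hξ.choose_mul_measure_le hmeas (measurableSet_singleton 1) A ⌈T⌉₊
  simp only [Set.mem_singleton_iff] at h
  refine le_trans (mul_le_mul_right (measure_mono fun ω (hω : T ≤ _) => ?_) _) h
  rw [sum_eq_card_filter_eq_one (h01 · ω)] at hω
  exact Nat.ceil_le.2 hω

lemma exp_half_le_one_add {ε : ℝ} (h0 : 0 ≤ ε) (h1 : ε ≤ 1) : exp (ε / 2) ≤ 1 + ε := by
  have h := (abs_le.1 (abs_exp_sub_one_sub_id_le (x := ε / 2)
    (abs_le.2 ⟨by linarith, by linarith⟩))).2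
  nlinarith

lemma exp_le_one_add_pow {ε s : ℝ} {b : ℕ} (h0 : 0 ≤ ε) (h1 : ε ≤ 1) (hs : s ≤ b * ε / 2) :
    exp s ≤ (1 + ε) ^ b :=
  calc exp s ≤ exp (b * (ε / 2)) := exp_le_exp.2 (by linarith)
    _ = exp (ε / 2) ^ b := by rw [exp_nat_mul]
    _ ≤ (1 + ε) ^ b := pow_le_pow_left₀ (exp_pos _).le (exp_half_le_one_add h0 h1) b

lemma choose_mul_pow_le_choose_mul_exp {t b N : ℕ} {q ε s : ℝ} (hq : 0 ≤ q) (hε0 : 0 ≤ ε)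
    (hε1 : ε ≤ 1) (hbN : b ≤ N) (hN : (1 + ε) * q * t ≤ N + 1 - b) (hs : s ≤ b * ε / 2) :
    t.choose b * q ^ b ≤ N.choose b * exp (-s) := by
  have hgap : ((N + 1 - b : ℕ) : ℝ) = N + 1 - b := by
    push_cast [Nat.cast_sub (by omega : b ≤ N + 1)]; ring
  calc (t.choose b : ℝ) * q ^ b ≤ t ^ b / b.factorial * q ^ b := by
        gcongr; exact Nat.choose_le_pow_div b t
    _ = (q * t) ^ b / b.factorial := by ring
    _ ≤ ((N + 1 - b) / (1 + ε)) ^ b / b.factorial := by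
        gcongr; rw [le_div_iff₀ (by linarith)]; linarith
    _ = ((N + 1 - b : ℕ) : ℝ) ^ b / b.factorial / (1 + ε) ^ b := by rw [hgap, div_pow]; ring
    _ ≤ N.choose b / exp s := by
        gcongr
        · exact Nat.pow_le_choose b N
        · exact exp_le_one_add_pow hε0 hε1 hs
    _ = N.choose b * exp (-s) := by rw [exp_neg, div_eq_mul_inv]

lemma two_mul_floor_half_le {x : ℝ} (hx : 0 ≤ x) : ((2 * ⌊x / 2⌋₊ : ℕ) : ℝ) ≤ x := by
  have := Nat.floor_le (div_nonneg hx zero_le_two)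
  push_cast; linarith

lemma sub_two_le_two_mul_floor_half (x : ℝ) : x - 2 ≤ ((2 * ⌊x / 2⌋₊ : ℕ) : ℝ) := by
  have := Nat.sub_one_lt_floor (x / 2)
  push_cast; linarith

lemma rpow_one_div_seventy_le {t b : ℝ} (ht : 4 ^ 420 ≤ t) (hb : t ^ ((1 : ℝ) / 10) - 2 ≤ b) :
    t ^ ((1 : ℝ) / 70) ≤ b * t ^ (-(1 : ℝ) / 12) / 2 := by
  have ht0 : 0 < t := lt_of_lt_of_le (by positivity) ht
  have hroot (n : ℕ) (hn : n ≤ 420) (hn0 : 0 < n) : 4 ≤ t ^ ((1 : ℝ) / n) := by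
    rw [one_div, le_rpow_inv_iff_of_pos (by norm_num) ht0.le (by positivity), rpow_natCast]
    exact le_trans (pow_le_pow_right₀ (by norm_num) hn) ht
  have h10 := hroot 10 (by norm_num) (by norm_num)
  have h420 := hroot 420 le_rfl (by norm_num)
  have hsplit : t ^ ((1 : ℝ) / 10) * t ^ (-(1 : ℝ) / 12) =
      t ^ ((1 : ℝ) / 70) * t ^ ((1 : ℝ) / 420) := by
    rw [← rpow_add ht0, ← rpow_add ht0]; norm_num
  have hε : 0 < t ^ (-(1 : ℝ) / 12) := rpow_pos_of_pos ht0 _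
  have h70 : 0 < t ^ ((1 : ℝ) / 70) := rpow_pos_of_pos ht0 _
  push_cast at h10 h420
  nlinarith [mul_le_mul_of_nonneg_right (show t ^ ((1 : ℝ) / 10) / 2 ≤ b by linarith) hε.le]

noncomputable def momentOrder (t : ℕ) : ℕ := 2 * ⌊(t : ℝ) ^ ((1 : ℝ) / 10) / 2⌋₊

noncomputable def tailThreshold (t : ℕ) (q : ℝ) : ℝ :=
  (t : ℝ) ^ ((3 : ℝ) / 5) + (1 + (t : ℝ) ^ (-(1 : ℝ) / 12)) * q * t

lemma momentOrder_le_rpow (t : ℕ) : (momentOrder t : ℝ) ≤ (t : ℝ) ^ ((1 : ℝ) / 10) :=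
  two_mul_floor_half_le (by positivity)

lemma momentOrder_le (t : ℕ) : momentOrder t ≤ t := by
  rcases t.eq_zero_or_pos with rfl | ht
  · simp [momentOrder]
  · exact_mod_cast (momentOrder_le_rpow t).trans
      (rpow_le_self_of_one_le (by exact_mod_cast ht) (by norm_num))

lemma momentOrder_le_rpow_three_div_five (t : ℕ) :
    (momentOrder t : ℝ) ≤ (t : ℝ) ^ ((3 : ℝ) / 5) := by
  rcases t.eq_zero_or_pos with rfl | ht
  · simp [momentOrder]
  · exact (momentOrder_le_rpow t).trans
      (rpow_le_rpow_of_exponent_le (by exact_mod_cast ht) (by norm_num))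

lemma momentOrder_le_ceil_tailThreshold (t : ℕ) {q : ℝ} (hq : 0 ≤ q) :
    momentOrder t ≤ ⌈tailThreshold t q⌉₊ := by
  have hb := momentOrder_le_rpow_three_div_five t
  have hN : (t : ℝ) ^ ((3 : ℝ) / 5) + (1 + (t : ℝ) ^ (-(1 : ℝ) / 12)) * q * t ≤
      ⌈tailThreshold t q⌉₊ := Nat.le_ceil _
  have : 0 ≤ (1 + (t : ℝ) ^ (-(1 : ℝ) / 12)) * q * t := by positivity
  exact_mod_cast (show (momentOrder t : ℝ) ≤ ⌈tailThreshold t q⌉₊ by linarith)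

lemma choose_mul_pow_le_choose_ceil_mul_exp {t : ℕ} {q : ℝ} (ht : 4 ^ 420 ≤ (t : ℝ))
    (hq : 0 ≤ q) :
    t.choose (momentOrder t) * q ^ momentOrder t ≤
      ⌈tailThreshold t q⌉₊.choose (momentOrder t) * exp (-(t : ℝ) ^ ((1 : ℝ) / 70)) := by
  have ht1 : 1 ≤ (t : ℝ) := le_trans (one_le_pow₀ (by norm_num)) ht
  have hb := momentOrder_le_rpow_three_div_five t
  have hN : (t : ℝ) ^ ((3 : ℝ) / 5) + (1 + (t : ℝ) ^ (-(1 : ℝ) / 12)) * q * t ≤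
      ⌈tailThreshold t q⌉₊ := Nat.le_ceil _
  refine choose_mul_pow_le_choose_mul_exp hq (by positivity)
    (rpow_le_one_of_one_le_of_nonpos ht1 (by norm_num))
    (momentOrder_le_ceil_tailThreshold t hq) (by linarith)
    (rpow_one_div_seventy_le ht (sub_two_le_two_mul_floor_half _))

lemma ENNReal.le_ofReal_of_natCast_mul_le {m n : ℕ} {x : ℝ≥0∞} {y z : ℝ} (hm : m ≠ 0)
    (hx : m * x ≤ n * ENNReal.ofReal y) (hyz : n * y ≤ m * z) :
    x ≤ ENNReal.ofReal z := by
  refine (ENNReal.mul_le_mul_iff_right (Nat.cast_ne_zero.2 hm) (ENNReal.natCast_ne_top m)).1 ?_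
  calc (m : ℝ≥0∞) * x ≤ n * ENNReal.ofReal y := hx
    _ = ENNReal.ofReal (n * y) := by
        rw [ENNReal.ofReal_mul (by positivity), ENNReal.ofReal_natCast]
    _ ≤ ENNReal.ofReal (m * z) := ENNReal.ofReal_le_ofReal hyz
    _ = m * ENNReal.ofReal z := by
        rw [ENNReal.ofReal_mul (by positivity), ENNReal.ofReal_natCast]

/-- For exchangeable `{0,1}`-valued `ξ₁,…,ξ_t`, with
`b = 2⌊t^{1/10}/2⌋` and `P(ξ₁ = ⋯ = ξ_b = 1) ≤ q^b` for some `q ∈ (0,1)`: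
there is an absolute constant `t₀` such that for all `t ≥ t₀`,
`P(Σᵢ ξᵢ ≥ t^{3/5} + (1 + t^{−1/12})·q·t) ≤ exp(−t^{1/70})`. -/
theorem exchangeable_stretched_exponential_bound :
    ∃ t₀ : ℕ, ∀ t : ℕ, t₀ ≤ t →
    ∀ {Ω : Type} [MeasureSpace Ω] [IsProbabilityMeasure (ℙ : Measure Ω)],
    ∀ ξ : Fin t → Ω → ℝ,
      (∀ i, Measurable (ξ i)) →
      (∀ i ω, ξ i ω = 0 ∨ ξ i ω = 1) →
      (∀ σ : Equiv.Perm (Fin t),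
        Measure.map (fun ω => fun i => ξ (σ i) ω) ℙ
          = Measure.map (fun ω => fun i => ξ i ω) ℙ) →
      ∀ q : ℝ, q ∈ Set.Ioo (0 : ℝ) 1 →
        (ℙ {ω | ∀ i : Fin t, (i : ℕ) < 2 * ⌊(t : ℝ) ^ ((1 : ℝ) / 10) / 2⌋₊ → ξ i ω = 1}
            ≤ ENNReal.ofReal (q ^ (2 * ⌊(t : ℝ) ^ ((1 : ℝ) / 10) / 2⌋₊))) →
        ℙ {ω | (t : ℝ) ^ ((3 : ℝ) / 5)
                + (1 + (t : ℝ) ^ (-(1 : ℝ) / 12)) * q * t ≤ ∑ i, ξ i ω}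
          ≤ ENNReal.ofReal (Real.exp (-(t : ℝ) ^ ((1 : ℝ) / 70))) := by
  refine ⟨4 ^ 420, fun t ht Ω _ _ ξ hmeas h01 hexch q hq hfirst => ?_⟩
  have ht' : (4 : ℝ) ^ 420 ≤ t := by exact_mod_cast ht
  have hA : #{i : Fin t | (i : ℕ) < momentOrder t} = momentOrder t := by
    rw [Fin.card_filter_val_lt, min_eq_right (momentOrder_le t)]
  have hmarkov := Exchangeable.choose_ceil_mul_measure_le hexch hmeas h01 (tailThreshold t q)
    {i : Fin t | (i : ℕ) < momentOrder t}
  simp only [hA, Fintype.card_fin, mem_filter, mem_univ, true_and] at hmarkov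
  have hpos := Nat.choose_pos (momentOrder_le_ceil_tailThreshold t hq.1.le)
  exact ENNReal.le_ofReal_of_natCast_mul_le hpos.ne' (hmarkov.trans (mul_le_mul_right hfirst _))
    (choose_mul_pow_le_choose_ceil_mul_exp ht' hq.1.le)
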